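/- Let H = (a_1,a_2; 1, ξ) be a naive EGK datum of length 2, and set 𝔢_1 = a_1 and 𝔢_2 = 2⌊(a_1+a_2)/2⌋. Then in ℚ(x,y) one has 𝓕(H;Y,X) = Σ_{i=0}^{𝔢_1} Y^i X^{−𝔢_2/2+i} Σ_{j=0}^{𝔢_2/2−i} X^{2j} − ξ Σ_{i=0}^{𝔢_1} Y^{i−1} X^{−𝔢_2/2+i+1} Σ_{j=0}^{𝔢_2/2−i−1} X^{2j}. -/

import Mathlib

noncomputable section

/-- The ambient field `ℚ(x,y)`. -/
abbrev KK : Type := FractionRing (MvPolynomial (Fin 2) ℚ)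

/-- `x = X^{1/2}`. -/
def xx : KK := algebraMap (MvPolynomial (Fin 2) ℚ) KK (MvPolynomial.X 0)

/-- `y = Y^{1/2}`. -/
def yy : KK := algebraMap (MvPolynomial (Fin 2) ℚ) KK (MvPolynomial.X 1)

/-- The invariant `𝔢_i` attached to the sequence `a` (indexed from 1). -/
def eInv (a : ℕ → ℕ) (i : ℕ) : ℤ :=
  if Odd i then ((∑ j ∈ Finset.Icc 1 i, a j : ℕ) : ℤ)
  else 2 * (((∑ j ∈ Finset.Icc 1 i, a j : ℕ) / 2 : ℕ) : ℤ)

/-- `C(e,ẽ,ξ;Y,X)`, written in terms of the square root `u = X^{1/2}` (and `Y = yy²`). -/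
def Cfun (e et : ℤ) (ξ : ℤ) (u : KK) : KK :=
  yy ^ et * u ^ (-(e - et) - 2) * (1 - (ξ : KK) * yy ^ (-2 : ℤ) * u ^ (2 : ℤ)) /
    (u ^ (-2 : ℤ) - u ^ (2 : ℤ))

/-- `D(e,ẽ,ξ;Y,X)`, in terms of `u = X^{1/2}`. -/
def Dfun (e et : ℤ) (ξ : ℤ) (u : KK) : KK :=
  yy ^ et * u ^ (-(e - et)) / (1 - (ξ : KK) * u ^ (2 : ℤ))

/-- `C_i`: equals `C` if `i` is even and `D` if `i` is odd. -/
def CD (i : ℕ) (e et : ℤ) (ξ : ℤ) (u : KK) : KK :=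
  if Even i then Cfun e et ξ u else Dfun e et ξ u

/-- The rational function `𝓕(H;Y,X)`, as a function of `u = X^{1/2}` (with `Y = yy²` fixed). -/
def Fcal (a : ℕ → ℕ) (ε : ℕ → ℤ) : ℕ → KK → KK
  | 0, _ => 1
  | 1, u => ∑ i ∈ Finset.range (a 1 + 1), u ^ (2 * (i : ℤ) - (a 1 : ℤ))
  | (m + 2), u =>
      CD (m + 2) (eInv a (m + 2)) (eInv a (m + 1))
          (if Even (m + 2) then ε (m + 2) else ε (m + 1)) u
        * Fcal a ε (m + 1) (yy * u)
      + (if Even (m + 2) then 1 else (ε (m + 2) : KK))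
        * CD (m + 2) (eInv a (m + 2)) (eInv a (m + 1))
            (if Even (m + 2) then ε (m + 2) else ε (m + 1)) u⁻¹
        * Fcal a ε (m + 1) (yy * u⁻¹)

/-- A naive EGK datum of length `n` (entries indexed by `1,…,n`). -/
structure IsNaiveEGK (n : ℕ) (a : ℕ → ℕ) (ε : ℕ → ℤ) : Prop where
  mono : ∀ i, 1 ≤ i → i + 1 ≤ n → a i ≤ a (i + 1)
  mem : ∀ i, 1 ≤ i → i ≤ n → ε i = 0 ∨ ε i = 1 ∨ ε i = -1
  n2 : ∀ i, 1 ≤ i → i ≤ n → Even i → (ε i ≠ 0 ↔ Even (∑ j ∈ Finset.Icc 1 i, a j))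
  n3 : ∀ i, 1 ≤ i → i ≤ n → Odd i → ε i ≠ 0
  n4 : 1 ≤ n → ε 1 = 1
  n5 : ∀ i, 3 ≤ i → i ≤ n → Odd i → Even (∑ j ∈ Finset.Icc 1 (i - 1), a j) →
    ε i = ε (i - 1) ^ (a i + a (i - 1)) * ε (i - 2)

/-! Unfolding the recursion once, each summand `i` of `𝓕(H;Y,X)` is `Y^i (f_i(X) + f_i(X⁻¹))` with
`f_i(X) = X^{i-m-1} (1 - ξ Y⁻¹ X) / (X⁻¹ - X)`, `m = 𝔢_2/2`. Over the common denominator `X⁻¹ - X`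
the numerator is `(X^{-k} - X^k) - ξ Y⁻¹ (X^{-(k-1)} - X^{k-1})` with `k = m - i + 1`, and each
difference `X^{-k} - X^k` is `X⁻¹ - X` times a geometric sum in `X²`. Since `a_1 ≤ a_2`, every
`i ≤ 𝔢_1` satisfies `i ≤ m`, so these geometric sums have the lengths appearing in the claim. -/

lemma xx_ne_zero : xx ≠ 0 := by simp [xx]

lemma yy_ne_zero : yy ≠ 0 := by simp [yy]

lemma xx_sq_sq_ne_one : (xx ^ 2) ^ 2 ≠ 1 := by
  intro h
  rw [← pow_mul] at h
  have h' : (MvPolynomial.X 0 : MvPolynomial (Fin 2) ℚ) ^ 4 = 1 :=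
    IsFractionRing.injective (MvPolynomial (Fin 2) ℚ) KK (by simpa [xx] using h)
  simpa using congrArg (MvPolynomial.eval fun _ => (0 : ℚ)) h'

lemma inv_sub_self_ne_zero {K : Type*} [Field K] {X : K} (hX0 : X ≠ 0) (hX : X ^ 2 ≠ 1) :
    X⁻¹ - X ≠ 0 := by
  intro h
  apply hX
  field_simp at h
  linear_combination -h

lemma geom_sum_sq_mul_inv_sub_self {K : Type*} [Field K] (X : K) (n : ℕ) :
    (∑ j ∈ Finset.range n, X ^ (2 * j)) * (X⁻¹ - X) = X⁻¹ * (1 - X ^ (2 * n)) := by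
  rcases eq_or_ne X 0 with rfl | hX
  · cases n <;> simp
  · have := geom_sum_mul_neg (X ^ 2) n
    simp only [← pow_mul] at this
    rw [← this]; field_simp

lemma Cfun_mul_zpow (m A i : ℕ) (ξ : ℤ) {u : KK} (hu : u ≠ 0) :
    Cfun (2 * (m : ℤ)) A ξ u * (yy * u) ^ (2 * (i : ℤ) - A) =
      (yy ^ 2) ^ i * (u ^ 2) ^ ((i : ℤ) - m - 1) * (1 - ξ * (yy ^ 2)⁻¹ * u ^ 2) /
        ((u ^ 2)⁻¹ - u ^ 2) := by
  rw [Cfun, mul_zpow]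
  have ey : yy ^ (A : ℤ) * yy ^ (2 * (i : ℤ) - A) = (yy ^ 2) ^ i := by
    rw [← zpow_add₀ yy_ne_zero, ← pow_mul, ← zpow_natCast]; push_cast; ring_nf
  have eu : u ^ (-(2 * (m : ℤ) - A) - 2) * u ^ (2 * (i : ℤ) - A) = (u ^ 2) ^ ((i : ℤ) - m - 1) := by
    rw [← zpow_add₀ hu, ← zpow_natCast, ← zpow_mul]; push_cast; ring_nf
  simp only [zpow_neg, zpow_ofNat]
  rw [← ey, ← eu]
  ring

lemma add_inv_term_eq_geom_sums {K : Type*} [Field K] {X Y : K} (hX : X ≠ 0) (hY : Y ≠ 0)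
    (hX2 : X ^ 2 ≠ 1) (c : K) {i m : ℕ} (him : i ≤ m) :
    Y ^ i * X ^ ((i : ℤ) - m - 1) * (1 - c * Y⁻¹ * X) / (X⁻¹ - X) +
        Y ^ i * X⁻¹ ^ ((i : ℤ) - m - 1) * (1 - c * Y⁻¹ * X⁻¹) / (X⁻¹⁻¹ - X⁻¹) =
      Y ^ i * X ^ ((i : ℤ) - m) * ∑ j ∈ Finset.range (m - i + 1), X ^ (2 * j) -
        c * (Y ^ ((i : ℤ) - 1) * X ^ ((i : ℤ) - m + 1) * ∑ j ∈ Finset.range (m - i), X ^ (2 * j)) := by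
  have hD := inv_sub_self_ne_zero hX hX2
  obtain ⟨n, rfl⟩ := Nat.exists_eq_add_of_le him
  have geom (k : ℕ) : ∑ j ∈ Finset.range k, X ^ (2 * j) = X⁻¹ * (1 - X ^ (2 * k)) / (X⁻¹ - X) :=
    eq_div_of_mul_eq hD (geom_sum_sq_mul_inv_sub_self X k)
  have e1 : (i : ℤ) - ↑(i + n) - 1 = -((n + 1 : ℕ) : ℤ) := by push_cast; ring
  have e2 : (i : ℤ) - ↑(i + n) = -(n : ℤ) := by push_cast; ring
  rw [Nat.add_sub_cancel_left, geom, geom, e1, e2, zpow_add_one₀ hX, zpow_sub_one₀ hY]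
  simp only [zpow_neg, zpow_natCast, inv_pow, inv_inv]
  field_simp
  ring

lemma Fcal_two (a : ℕ → ℕ) (ε : ℕ → ℤ) (u : KK) :
    Fcal a ε 2 u = ∑ i ∈ Finset.range (a 1 + 1),
      (Cfun (2 * (((a 1 + a 2) / 2 : ℕ) : ℤ)) (a 1) (ε 2) u * (yy * u) ^ (2 * (i : ℤ) - a 1) +
        Cfun (2 * (((a 1 + a 2) / 2 : ℕ) : ℤ)) (a 1) (ε 2) u⁻¹ *
          (yy * u⁻¹) ^ (2 * (i : ℤ) - a 1)) := by
  have e1 : eInv a 1 = a 1 := by simp [eInv]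
  have e2 : eInv a 2 = 2 * (((a 1 + a 2) / 2 : ℕ) : ℤ) := by
    simp [eInv, Finset.sum_Icc_succ_top]
  simp only [Fcal, CD, Nat.zero_add, if_pos even_two, e1, e2, one_mul, Finset.mul_sum,
    Finset.sum_add_distrib]

theorem statement_8 (a : ℕ → ℕ) (ε : ℕ → ℤ) (H : IsNaiveEGK 2 a ε) :
    Fcal a ε 2 xx =
      (∑ i ∈ Finset.range (a 1 + 1),
          (yy ^ 2) ^ i * (xx ^ 2) ^ ((i : ℤ) - (((a 1 + a 2) / 2 : ℕ) : ℤ)) *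
            ∑ j ∈ Finset.range ((a 1 + a 2) / 2 - i + 1), (xx ^ 2) ^ (2 * j)) -
      (ε 2 : KK) *
        ∑ i ∈ Finset.range (a 1 + 1),
          (yy ^ 2) ^ ((i : ℤ) - 1) *
            (xx ^ 2) ^ ((i : ℤ) - (((a 1 + a 2) / 2 : ℕ) : ℤ) + 1) *
            ∑ j ∈ Finset.range ((a 1 + a 2) / 2 - i), (xx ^ 2) ^ (2 * j) := by
  have hmono : a 1 ≤ a 2 := H.mono 1 le_rfl le_rfl
  rw [Fcal_two, Finset.mul_sum, ← Finset.sum_sub_distrib]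
  refine Finset.sum_congr rfl fun i hi => ?_
  have hi : i ≤ (a 1 + a 2) / 2 := by rw [Finset.mem_range] at hi; omega
  rw [Cfun_mul_zpow _ _ _ _ xx_ne_zero, Cfun_mul_zpow _ _ _ _ (inv_ne_zero xx_ne_zero), inv_pow]
  exact add_inv_term_eq_geom_sums (pow_ne_zero 2 xx_ne_zero) (pow_ne_zero 2 yy_ne_zero)
    xx_sq_sq_ne_one _ hi

end
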